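/- There exists a constant C > 0 such that for all b > 0, ∫_0^∞ e^{−r/8}·(1 + √r)·min(1, b²r²) dr ≤ C·(min(1, b²) + e^{−1/(16b)}). -/

import Mathlib

/-! Since `min 1 (b² r²) ≤ min 1 b² * (1 + r²)`, the integral is at most `min 1 b²` times the
finite integral of `e^{-r/8} (1 + √r) (1 + r²)`. -/

open MeasureTheory Set Real

lemma min_one_mul_le_min_one_mul_one_add {a t : ℝ} (ha : 0 ≤ a) (ht : 0 ≤ t) :
    min 1 (a * t) ≤ min 1 a * (1 + t) := by
  rcases le_total a 1 with h | h
  · rw [min_eq_right h]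
    exact (min_le_right _ _).trans (by nlinarith)
  · rw [min_eq_left h]
    exact (min_le_left _ _).trans (by linarith)

lemma integrableOn_rpow_mul_exp_neg_div {s c : ℝ} (hs : -1 < s) (hc : 0 < c) :
    IntegrableOn (fun r : ℝ => r ^ s * exp (-r / c)) (Ioi 0) := by
  have h := integrableOn_rpow_mul_exp_neg_mul_rpow (p := 1) hs one_pos (inv_pos.mpr hc)
  refine h.congr_fun (fun r _ => ?_) measurableSet_Ioi
  simp only [rpow_one]
  ring_nf

lemma integrableOn_exp_neg_div_mul_one_add_sqrt_mul_one_add_sq {c : ℝ} (hc : 0 < c) :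
    IntegrableOn (fun r : ℝ => exp (-r / c) * (1 + √r) * (1 + r ^ 2)) (Ioi 0) := by
  have hsum := (((integrableOn_rpow_mul_exp_neg_div (s := 0) (by norm_num) hc).add
    (integrableOn_rpow_mul_exp_neg_div (s := 1 / 2) (by norm_num) hc)).add
    (integrableOn_rpow_mul_exp_neg_div (s := 2) (by norm_num) hc)).add
    (integrableOn_rpow_mul_exp_neg_div (s := 5 / 2) (by norm_num) hc)
  refine hsum.congr_fun (fun r (hr : 0 < r) => ?_) measurableSet_Ioi
  have h52 : r ^ (5 / 2 : ℝ) = r ^ (1 / 2 : ℝ) * r ^ (2 : ℝ) := by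
    rw [← rpow_add hr]; norm_num
  simp only [Pi.add_apply, h52, rpow_zero, rpow_two, ← sqrt_eq_rpow]
  ring

lemma setIntegral_exp_neg_div_mul_min_one_le {c : ℝ} (hc : 0 < c) (b : ℝ) :
    ∫ r in Ioi 0, exp (-r / c) * (1 + √r) * min 1 (b ^ 2 * r ^ 2)
      ≤ min 1 (b ^ 2) * ∫ r in Ioi 0, exp (-r / c) * (1 + √r) * (1 + r ^ 2) := by
  rw [← integral_const_mul]
  refine integral_mono_of_nonneg (.of_forall fun r => by positivity)
    ((integrableOn_exp_neg_div_mul_one_add_sqrt_mul_one_add_sq hc).const_mul _)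
    (.of_forall fun r => ?_)
  calc exp (-r / c) * (1 + √r) * min 1 (b ^ 2 * r ^ 2)
      ≤ exp (-r / c) * (1 + √r) * (min 1 (b ^ 2) * (1 + r ^ 2)) := by
        gcongr
        exact min_one_mul_le_min_one_mul_one_add (sq_nonneg b) (sq_nonneg r)
    _ = min 1 (b ^ 2) * (exp (-r / c) * (1 + √r) * (1 + r ^ 2)) := by ring

theorem integral_min_bound :
    ∃ C > 0, ∀ b > 0,
      (∫ r in Set.Ioi (0:ℝ),
          Real.exp (-r / 8) * (1 + Real.sqrt r) * min 1 (b ^ 2 * r ^ 2))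
        ≤ C * (min 1 (b ^ 2) + Real.exp (-1 / (16 * b))) := by
  set I := ∫ r in Ioi (0 : ℝ), exp (-r / 8) * (1 + √r) * (1 + r ^ 2)
  have hI : 0 ≤ I := setIntegral_nonneg measurableSet_Ioi fun r _ => by positivity
  refine ⟨I + 1, by linarith, fun b _ => ?_⟩
  have hmin : 0 ≤ min 1 (b ^ 2) := by positivity
  have hexp : 0 < exp (-1 / (16 * b)) := exp_pos _
  calc _ ≤ min 1 (b ^ 2) * I := setIntegral_exp_neg_div_mul_min_one_le (by norm_num) b
    _ ≤ (I + 1) * (min 1 (b ^ 2) + exp (-1 / (16 * b))) := by nlinarith
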